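/- In the path graph G(P) of a set P of n ≥ 5 points in convex position, every vertex representing a non-boundary path (a path containing at least one diagonal) has degree strictly less than 3n-7. -/

import Mathlib

namespace PG

/-- The `k`-th vertex (mod `n`) of the convex polygon. -/
def pt (n : ℕ) (hn : 0 < n) (k : ℕ) : Fin n := ⟨k % n, Nat.mod_lt _ hn⟩

/-- `e` is a boundary (convex hull) edge of the convex `n`-gon. -/
def IsHullEdge {n : ℕ} (e : Sym2 (Fin n)) : Prop :=
  ∃ a b : Fin n, e = s(a, b) ∧ ((a.val + 1) % n = b.val ∨ (b.val + 1) % n = a.val)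

instance {n : ℕ} : DecidablePred (IsHullEdge (n := n)) := fun _ => by
  unfold IsHullEdge; infer_instance

/-- Two chords of the convex `n`-gon cross (intersect in interior points):
their endpoint pairs are all distinct and separate each other in the cyclic order. -/
def Crosses {n : ℕ} (e f : Sym2 (Fin n)) : Prop :=
  ∃ a b c d : Fin n, e = s(a, b) ∧ f = s(c, d) ∧
    a ≠ b ∧ c ≠ d ∧ a ≠ c ∧ a ≠ d ∧ b ≠ c ∧ b ≠ d ∧
    (((c.val + n - a.val) % n < (b.val + n - a.val) % n) ↔
      ¬((d.val + n - a.val) % n < (b.val + n - a.val) % n))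

instance {n : ℕ} (e f : Sym2 (Fin n)) : Decidable (Crosses e f) := by
  unfold Crosses; infer_instance

/-- The edge set of the spanning path visiting the points in the order given
by the permutation `p`. -/
def pathEdges {n : ℕ} (p : Equiv.Perm (Fin n)) : Finset (Sym2 (Fin n)) :=
  Finset.univ.filter (fun e => ∃ i j : Fin n, e = s(p i, p j) ∧ j.val = i.val + 1)

/-- `E` is the edge set of a non-crossing (plane) spanning path. -/
def IsNCPath {n : ℕ} (E : Finset (Sym2 (Fin n))) : Prop :=
  (∃ p : Equiv.Perm (Fin n), E = pathEdges p) ∧ ∀ e ∈ E, ∀ f ∈ E, ¬ Crosses e f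

instance {n : ℕ} : DecidablePred (IsNCPath (n := n)) := fun _ => by
  unfold IsNCPath pathEdges; infer_instance

/-- Vertices of the path graph `G(P)`: non-crossing spanning paths. -/
def PVert (n : ℕ) := {E : Finset (Sym2 (Fin n)) // IsNCPath E}

instance {n : ℕ} : Fintype (PVert n) := Subtype.fintype _
instance {n : ℕ} : DecidableEq (PVert n) := Subtype.instDecidableEq

/-- The path graph `G(P)`: two plane spanning paths are adjacent iff their
edge sets differ in exactly two edges. -/
def pathGraph (n : ℕ) : SimpleGraph (PVert n) where
  Adj u v := u ≠ v ∧ (u.1 \ v.1 ∪ v.1 \ u.1).card = 2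
  symm := ⟨by rintro u v ⟨h1, h2⟩; exact ⟨h1.symm, by rwa [Finset.union_comm]⟩⟩
  loopless := ⟨by rintro u ⟨h, _⟩; exact h rfl⟩

instance {n : ℕ} : DecidableRel (pathGraph n).Adj := fun u v => by
  unfold pathGraph; infer_instance

/-- `v` is a boundary path: all its edges are hull edges. -/
def IsBoundary {n : ℕ} (v : PVert n) : Prop := ∀ e ∈ v.1, IsHullEdge e

/-- Number of diagonals (the level) of a path. -/
def diagCount {n : ℕ} (v : PVert n) : ℕ :=
  (v.1.filter (fun e => ¬ IsHullEdge e)).card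

/-- Degree of a point in an edge set. -/
def degIn {n : ℕ} (E : Finset (Sym2 (Fin n))) (x : Fin n) : ℕ :=
  (E.filter (fun e => x ∈ e)).card

/-!
Deleting the `k`-th edge `pₖpₖ₊₁` of a spanning path `p₀p₁⋯pₙ₋₁` leaves two pieces with ends
`{p₀, pₖ}` and `{pₖ₊₁, pₙ₋₁}`, and a spanning path through the remaining edges must join an end
of each. So a neighbour of the path trades `pₖpₖ₊₁` for one of at most three edges, and for only
the closing edge `p₀pₙ₋₁` when `k = 0` or `k = n - 2`: at most `3n - 7` exchanges in all.
If trading `pₖpₖ₊₁` for the closing edge gave a plane path for every `1 ≤ k ≤ n - 3`, the closing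
edge would cross no edge of the path (as `n ≥ 5`, every edge survives one of these exchanges), and
the path would close up into a plane Hamiltonian cycle, all of whose edges are hull edges. So
a path with a diagonal has at least one exchange that is not a neighbour.
-/

open Finset

lemma exists_flip {P : ℕ → Prop} {s t : ℕ} (hst : s ≤ t) (hs : P s) (ht : ¬ P t) :
    ∃ m, s ≤ m ∧ m < t ∧ P m ∧ ¬ P (m + 1) := by
  induction t, hst using Nat.le_induction with
  | base => exact absurd hs ht
  | succ t hst ih =>
    by_cases hPt : P t
    · exact ⟨t, hst, t.lt_succ_self, hPt, ht⟩
    · obtain ⟨m, hsm, hmt, hm⟩ := ih hPt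
      exact ⟨m, hsm, hmt.trans t.lt_succ_self, hm⟩

lemma exists_sym2_flip {α : Type*} (c : ℕ → α) (P : α → Prop) {s t : ℕ} (hs : P (c s))
    (ht : ¬ P (c t)) :
    ∃ m, min s t ≤ m ∧ m < max s t ∧ ∃ x y, s(x, y) = s(c m, c (m + 1)) ∧ P x ∧ ¬ P y := by
  rcases le_total s t with hst | hts
  · obtain ⟨m, hsm, hmt, hm, hm1⟩ := exists_flip (P := fun i => P (c i)) hst hs ht
    exact ⟨m, by omega, by omega, c m, c (m + 1), rfl, hm, hm1⟩
  · obtain ⟨m, htm, hms, hm, hm1⟩ := exists_flip (P := fun i => ¬ P (c i)) hts ht (not_not.2 hs)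
    exact ⟨m, by omega, by omega, c (m + 1), c m, Sym2.eq_swap, not_not.1 hm1, hm⟩

lemma exists_eq_insert_erase_of_card_eq {α : Type*} [DecidableEq α] {s t : Finset α}
    (hcard : #s = #t) (h : #(s \ t ∪ t \ s) = 2) :
    ∃ e ∈ s, ∃ f ∉ s, t = insert f (s.erase e) := by
  have hst := card_sdiff_comm hcard
  rw [card_union_of_disjoint disjoint_sdiff_sdiff] at h
  obtain ⟨e, he⟩ := card_eq_one.1 (by omega : #(s \ t) = 1)
  obtain ⟨f, hf⟩ := card_eq_one.1 (by omega : #(t \ s) = 1)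
  simp only [Finset.ext_iff, mem_sdiff, mem_singleton] at he hf
  refine ⟨e, (he e).2 rfl |>.1, f, (hf f).2 rfl |>.2, ?_⟩
  ext g
  simp only [mem_insert, mem_erase]
  grind

variable {n : ℕ}

section Positions

variable (hn : 0 < n)

lemma pt_of_lt {m : ℕ} (h : m < n) : pt n hn m = ⟨m, h⟩ :=
  Fin.ext (Nat.mod_eq_of_lt h)

lemma pt_add_self (m : ℕ) : pt n hn (m + n) = pt n hn m :=
  Fin.ext (Nat.add_mod_right m n)

lemma eq_of_pt_eq {s m m' : ℕ} (hm : s ≤ m) (hm' : s ≤ m') (hms : m < s + n)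
    (hms' : m' < s + n) (h : pt n hn m = pt n hn m') : m = m' := by
  have hmod : s + (m - s) ≡ s + (m' - s) [MOD n] := by
    rw [Nat.add_sub_cancel' hm, Nat.add_sub_cancel' hm']
    exact Fin.ext_iff.1 h
  have := (Nat.ModEq.add_left_cancel' s hmod).eq_of_lt_of_lt (by omega) (by omega)
  omega

lemma exists_pt_eq (s : ℕ) (x : Fin n) : ∃ m, s ≤ m ∧ m < s + n ∧ pt n hn m = x := by
  have hs := Nat.div_add_mod s n
  have hr := Nat.mod_lt s hn
  have hx := x.isLt
  by_cases hxr : s % n ≤ x.val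
  · refine ⟨n * (s / n) + x.val, by omega, by omega, Fin.ext ?_⟩
    simp [pt, Nat.mod_eq_of_lt hx]
  · refine ⟨n * (s / n + 1) + x.val, by rw [Nat.mul_succ]; omega, by rw [Nat.mul_succ]; omega,
      Fin.ext ?_⟩
    simp [pt, Nat.mod_eq_of_lt hx]

lemma pt_ne_of_between {j m : ℕ} (h1 : j + 2 ≤ m) (h2 : m < j + n) :
    pt n hn m ≠ pt n hn j ∧ pt n hn m ≠ pt n hn (j + 1) := by
  rw [← pt_add_self hn j]
  constructor
  all_goals
    intro h
    have := eq_of_pt_eq hn (s := j + 1) (by omega) (by omega) (by omega) (by omega) h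
    omega

lemma exists_pt_eq_of_between {j : ℕ} {x : Fin n} (hxj : x ≠ pt n hn j)
    (hxj' : x ≠ pt n hn (j + 1)) : ∃ m, j + 2 ≤ m ∧ m < j + n ∧ pt n hn m = x := by
  obtain ⟨m, h1, h2, rfl⟩ := exists_pt_eq hn (j + 1) x
  refine ⟨m, ?_, ?_, rfl⟩
  · by_contra
    exact hxj' (by rw [(by omega : m = j + 1)])
  · by_contra
    exact hxj (by rw [(by omega : m = j + n), pt_add_self])

end Positions

section PathEdges

variable (hn : 0 < n) (p : Equiv.Perm (Fin n))

/-- Positions are read mod `n`, so `pathEdge hn p (n - 1)` is the closing edge. -/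
def pathEdge (i : ℕ) : Sym2 (Fin n) := s(p (pt n hn i), p (pt n hn (i + 1)))

def closingEdge : Sym2 (Fin n) := s(p (pt n hn 0), p (pt n hn (n - 1)))

lemma mem_pathEdges_iff {e : Sym2 (Fin n)} :
    e ∈ pathEdges p ↔ ∃ i < n - 1, pathEdge hn p i = e := by
  simp only [pathEdges, mem_filter, mem_univ, true_and]
  constructor
  · rintro ⟨i, j, rfl, hj⟩
    obtain ⟨j, hjn⟩ := j
    obtain rfl : j = i + 1 := hj
    refine ⟨i, by omega, ?_⟩
    rw [pathEdge, pt_of_lt hn i.isLt, pt_of_lt hn hjn]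
  · rintro ⟨i, hi, rfl⟩
    exact ⟨pt n hn i, pt n hn (i + 1), rfl, by
      rw [pt_of_lt hn (by omega : i < n), pt_of_lt hn (by omega : i + 1 < n)]⟩

lemma pathEdge_mem_pathEdges {i : ℕ} (hi : i < n - 1) : pathEdge hn p i ∈ pathEdges p :=
  (mem_pathEdges_iff hn p).2 ⟨i, hi, rfl⟩

lemma pathEdges_eq_image : pathEdges p = (range (n - 1)).image (pathEdge hn p) := by
  ext e
  simp [mem_pathEdges_iff hn p]

lemma pathEdge_injOn : Set.InjOn (pathEdge hn p) (Set.Iio (n - 1)) := by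
  intro i hi j hj h
  simp only [Set.mem_Iio] at hi hj
  simp only [pathEdge, pt_of_lt hn (by omega : i < n), pt_of_lt hn (by omega : i + 1 < n),
    pt_of_lt hn (by omega : j < n), pt_of_lt hn (by omega : j + 1 < n), Sym2.eq_iff,
    p.injective.eq_iff, Fin.mk.injEq] at h
  omega

lemma card_pathEdges : #(pathEdges p) = n - 1 := by
  rcases Nat.eq_zero_or_pos n with rfl | hn
  · simp [pathEdges]
  rw [pathEdges_eq_image hn p, card_image_of_injOn, card_range]
  exact (pathEdge_injOn hn p).mono fun i hi => by simpa using hi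

lemma mem_pathEdge_iff {i : ℕ} (hi : i < n - 1) (x : Fin n) :
    x ∈ pathEdge hn p i ↔ (p.symm x).val = i ∨ (p.symm x).val = i + 1 := by
  rw [pathEdge, pt_of_lt hn (by omega : i < n), pt_of_lt hn (by omega : i + 1 < n),
    Sym2.mem_iff, ← p.symm_apply_eq, ← p.symm_apply_eq, Fin.ext_iff, Fin.ext_iff]

lemma degIn_pathEdges (x : Fin n) :
    degIn (pathEdges p) x =
      #{i ∈ range (n - 1) | (p.symm x).val = i ∨ (p.symm x).val = i + 1} := by
  have hn := x.pos
  rw [degIn, pathEdges_eq_image hn p, filter_image, card_image_of_injOn]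
  · congr 1
    ext i
    simp only [mem_filter, mem_range, and_congr_right_iff]
    exact fun hi => mem_pathEdge_iff hn p hi x
  · exact (pathEdge_injOn hn p).mono fun i hi => by simp_all

lemma degIn_pathEdges_le_two (x : Fin n) : degIn (pathEdges p) x ≤ 2 := by
  rw [degIn_pathEdges p]
  calc _ ≤ #({(p.symm x).val, (p.symm x).val - 1} : Finset ℕ) := by
        apply card_le_card
        intro i hi
        simp only [mem_filter, mem_insert, mem_singleton] at hi ⊢
        omega
    _ ≤ 2 := card_le_two

lemma degIn_pathEdges_eq_two {x : Fin n} (h0 : 0 < (p.symm x).val)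
    (h1 : (p.symm x).val < n - 1) : degIn (pathEdges p) x = 2 := by
  rw [degIn_pathEdges p]
  convert card_pair (by omega : (p.symm x).val ≠ (p.symm x).val - 1)
  ext i
  simp only [mem_filter, mem_range, mem_insert, mem_singleton]
  omega

lemma pathEdge_mem_or_eq_closingEdge (m : ℕ) :
    pathEdge hn p m ∈ pathEdges p ∨ pathEdge hn p m = closingEdge hn p := by
  have hm := Nat.mod_lt m hn
  have hpt : pt n hn m = pt n hn (m % n) := Fin.ext (Nat.mod_mod m n).symm
  have hpt1 : pt n hn (m + 1) = pt n hn (m % n + 1) := Fin.ext (Nat.mod_add_mod m n 1).symm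
  rcases Nat.lt_or_ge (m % n) (n - 1) with hr | hr
  · left
    rw [pathEdge, hpt, hpt1]
    exact pathEdge_mem_pathEdges hn p hr
  · right
    rw [pathEdge, hpt, hpt1, closingEdge, Sym2.eq_swap, (by omega : m % n + 1 = 0 + n),
      pt_add_self, (by omega : m % n = n - 1)]

end PathEdges

lemma exists_mem_pathEdges_flip (q : Equiv.Perm (Fin n)) (P : Fin n → Prop) {x y : Fin n}
    (hx : P x) (hy : ¬ P y) : ∃ u w, s(u, w) ∈ pathEdges q ∧ P u ∧ ¬ P w := by
  have hn := x.pos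
  have hc : ∀ z, q (pt n hn (q.symm z).val) = z := fun z => by simp [pt_of_lt hn]
  obtain ⟨m, -, hm, u, w, huw, hu, hw⟩ := exists_sym2_flip (fun i => q (pt n hn i)) P
    (s := (q.symm x).val) (t := (q.symm y).val) (by rwa [hc]) (by rwa [hc])
  refine ⟨u, w, ?_, hu, hw⟩
  rw [huw]
  exact pathEdge_mem_pathEdges hn q (by omega)

lemma degIn_insert {E : Finset (Sym2 (Fin n))} {f : Sym2 (Fin n)} (hf : f ∉ E) {x : Fin n}
    (hx : x ∈ f) : degIn (insert f E) x = degIn E x + 1 := by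
  rw [degIn, degIn, filter_insert, if_pos hx, card_insert_of_notMem (by simp [hf])]

lemma degIn_erase_of_notMem {E : Finset (Sym2 (Fin n))} {e : Sym2 (Fin n)} {x : Fin n}
    (hx : x ∉ e) : degIn (E.erase e) x = degIn E x := by
  rw [degIn, degIn, filter_erase, erase_eq_of_notMem (by simp [hx])]

section Exchange

variable (hn : 0 < n) (p : Equiv.Perm (Fin n))

def exchange (k : ℕ) (f : Sym2 (Fin n)) : Finset (Sym2 (Fin n)) :=
  insert f ((pathEdges p).erase (pathEdge hn p k))

def exchangeEdges (k : ℕ) : Finset (Sym2 (Fin n)) :=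
  ((({0, k} : Finset ℕ) ×ˢ ({k + 1, n - 1} : Finset ℕ)).image
    fun ij => s(p (pt n hn ij.1), p (pt n hn ij.2))).erase (pathEdge hn p k)

def exchangePairs : Finset (Σ _ : ℕ, Sym2 (Fin n)) :=
  (range (n - 1)).sigma (exchangeEdges hn p)

lemma end_of_degIn_erase_pathEdge_le_one {k : ℕ} (hk : k < n - 1) {x : Fin n}
    (h : degIn ((pathEdges p).erase (pathEdge hn p k)) x ≤ 1) :
    (p.symm x).val = 0 ∨ (p.symm x).val = k ∨ (p.symm x).val = k + 1 ∨
      (p.symm x).val = n - 1 := by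
  by_contra! hx
  have hxk : x ∉ pathEdge hn p k := by rw [mem_pathEdge_iff hn p hk]; omega
  rw [degIn_erase_of_notMem hxk, degIn_pathEdges_eq_two p (by omega) (by omega)] at h
  omega

lemma mem_exchangeEdges {k : ℕ} (hk : k < n - 1) {f : Sym2 (Fin n)} (hf : f ∉ pathEdges p)
    {q : Equiv.Perm (Fin n)} (hq : exchange hn p k f = pathEdges q) :
    f ∈ exchangeEdges hn p k := by
  -- `q` has an edge `uw` leaving the positions `≤ k` of `p`, and only `f` can be that edge
  obtain ⟨u, w, huw, hu, hw⟩ := exists_mem_pathEdges_flip q (fun z => (p.symm z).val ≤ k)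
    (x := p (pt n hn 0)) (y := p (pt n hn (n - 1))) (by simp [pt_of_lt hn hn])
    (by simp [pt_of_lt hn (by omega : n - 1 < n)]; omega)
  rw [← hq, exchange, mem_insert, mem_erase] at huw
  have hf_eq : f = s(u, w) := by
    rcases huw with h | ⟨hne, h⟩
    · exact h.symm
    · obtain ⟨j, hj, hje⟩ := (mem_pathEdges_iff hn p).1 h
      have hjk : j ≠ k := by rintro rfl; exact hne hje.symm
      have hu' := (mem_pathEdge_iff hn p hj u).1 (hje ▸ Sym2.mem_mk_left u w)
      have hw' := (mem_pathEdge_iff hn p hj w).1 (hje ▸ Sym2.mem_mk_right u w)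
      omega
  have hfE : f ∉ (pathEdges p).erase (pathEdge hn p k) := fun h => hf (mem_of_mem_erase h)
  -- the ends of `f` have degree `≤ 1` in the kept edges, so they are ends of the two pieces
  have hend : ∀ z ∈ f, degIn ((pathEdges p).erase (pathEdge hn p k)) z ≤ 1 := by
    intro z hz
    have h2 := degIn_pathEdges_le_two q z
    rw [← hq, exchange, degIn_insert hfE hz] at h2
    omega
  have hu_end := end_of_degIn_erase_pathEdge_le_one hn p hk (hend u (hf_eq ▸ Sym2.mem_mk_left u w))
  have hw_end := end_of_degIn_erase_pathEdge_le_one hn p hk (hend w (hf_eq ▸ Sym2.mem_mk_right u w))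
  rw [exchangeEdges, mem_erase, mem_image]
  refine ⟨fun h => hf (h ▸ pathEdge_mem_pathEdges hn p hk), ((p.symm u).val, (p.symm w).val), ?_,
    by simp [hf_eq, pt_of_lt hn]⟩
  simp only [mem_product, mem_insert, mem_singleton]
  omega

lemma card_exchangeEdges_le {k : ℕ} (hk : k < n - 1) :
    #(exchangeEdges hn p k) ≤ if k = 0 ∨ k = n - 2 then 1 else 3 := by
  have hmem : pathEdge hn p k ∈ (({0, k} : Finset ℕ) ×ˢ ({k + 1, n - 1} : Finset ℕ)).image
      fun ij => s(p (pt n hn ij.1), p (pt n hn ij.2)) :=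
    mem_image.2 ⟨(k, k + 1), by simp, rfl⟩
  rw [exchangeEdges, card_erase_of_mem hmem]
  refine (Nat.sub_le_sub_right card_image_le 1).trans ?_
  rw [card_product]
  split_ifs with hk_end
  · rcases hk_end with rfl | rfl
    · simp [card_le_two]
    · simp [(by omega : n - 2 + 1 = n - 1), card_le_two]
  · have h1 := card_le_two (a := 0) (b := k)
    have h2 := card_le_two (a := k + 1) (b := n - 1)
    have := Nat.mul_le_mul h1 h2
    omega

lemma card_exchangePairs_le (h3 : 3 ≤ n) : #(exchangePairs hn p) ≤ 3 * n - 7 := by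
  obtain ⟨m, rfl⟩ : ∃ m, n = m + 3 := ⟨n - 3, by omega⟩
  rw [exchangePairs, card_sigma, (by omega : m + 3 - 1 = m + 1 + 1)]
  calc ∑ k ∈ range (m + 1 + 1), #(exchangeEdges hn p k)
      ≤ ∑ k ∈ range (m + 1 + 1), if k = 0 ∨ k = m + 3 - 2 then 1 else 3 :=
        sum_le_sum fun k hk => card_exchangeEdges_le hn p (by have := mem_range.1 hk; omega)
    _ = 3 * (m + 3) - 7 := by
        rw [sum_range_succ, sum_range_succ', if_pos (Or.inl rfl),
          if_pos (Or.inr (show m + 1 = m + 3 - 2 by omega)),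
          sum_congr rfl fun k hk => if_neg (by have := mem_range.1 hk; omega), sum_const,
          card_range, smul_eq_mul]
        omega

lemma closingEdge_mem_exchangeEdges (h3 : 3 ≤ n) {k : ℕ} (hk : k < n - 1) :
    closingEdge hn p ∈ exchangeEdges hn p k := by
  refine mem_erase.2 ⟨fun h => ?_, mem_image.2 ⟨(0, n - 1), by simp, rfl⟩⟩
  simp only [closingEdge, pathEdge, pt_of_lt hn hn, pt_of_lt hn (by omega : n - 1 < n),
    pt_of_lt hn (by omega : k < n), pt_of_lt hn (by omega : k + 1 < n), Sym2.eq_iff,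
    p.injective.eq_iff, Fin.mk.injEq] at h
  omega

end Exchange

section Degree

variable (hn : 0 < n) {p : Equiv.Perm (Fin n)} {v : PVert n}

lemma exists_exchange_of_adj (hv : v.1 = pathEdges p) {u : PVert n}
    (h : (pathGraph n).Adj v u) : ∃ x ∈ exchangePairs hn p, u.1 = exchange hn p x.1 x.2 := by
  obtain ⟨⟨q, hq⟩, -⟩ := u.2
  have hcard : #v.1 = #u.1 := by rw [hv, hq, card_pathEdges, card_pathEdges]
  obtain ⟨e, he, f, hf, hu⟩ := exists_eq_insert_erase_of_card_eq hcard h.2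
  rw [hv] at he hf hu
  obtain ⟨k, hk, rfl⟩ := (mem_pathEdges_iff hn p).1 he
  exact ⟨⟨k, f⟩, mem_sigma.2 ⟨mem_range.2 hk, mem_exchangeEdges hn p hk hf (hu.symm.trans hq)⟩,
    hu⟩

lemma degree_le_card_filter_exchangePairs (hv : v.1 = pathEdges p) :
    (pathGraph n).degree v ≤ #{x ∈ exchangePairs hn p | IsNCPath (exchange hn p x.1 x.2)} :=
  calc (pathGraph n).degree v = #((pathGraph n).neighborFinset v) := rfl
    _ ≤ #({x ∈ exchangePairs hn p | IsNCPath (exchange hn p x.1 x.2)}.image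
          fun x => exchange hn p x.1 x.2) := by
        refine card_le_card_of_injOn Subtype.val (fun u hu => ?_) Subtype.val_injective.injOn
        obtain ⟨x, hx, hux⟩ :=
          exists_exchange_of_adj hn hv ((pathGraph n).mem_neighborFinset v u |>.1 hu)
        exact mem_image.2 ⟨x, mem_filter.2 ⟨hx, hux ▸ u.2⟩, hux.symm⟩
    _ ≤ _ := card_image_le

end Degree

section Convex

/-- The number of hull steps from `a` forward (in the direction of increasing labels) to `x`;
`Crosses` is phrased in terms of it. -/
def ccwDist (a x : Fin n) : ℕ := (x.val + n - a.val) % n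

lemma ccwDist_eq_ite (a x : Fin n) :
    ccwDist a x = if a.val ≤ x.val then x.val - a.val else x.val + n - a.val := by
  have ha := a.isLt
  have hx := x.isLt
  rw [ccwDist]
  split_ifs with h
  · rw [(by omega : x.val + n - a.val = x.val - a.val + n), Nat.add_mod_right,
      Nat.mod_eq_of_lt (by omega)]
  · exact Nat.mod_eq_of_lt (by omega)

lemma ccwDist_lt (a x : Fin n) : ccwDist a x < n :=
  Nat.mod_lt _ a.pos

lemma ccwDist_self (a : Fin n) : ccwDist a a = 0 := by
  simp [ccwDist_eq_ite]

lemma ccwDist_injective (a : Fin n) : Function.Injective (ccwDist a) := by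
  intro x y h
  have := x.isLt
  have := y.isLt
  rw [ccwDist_eq_ite, ccwDist_eq_ite] at h
  ext
  split_ifs at h <;> omega

lemma exists_ccwDist_eq (a : Fin n) {m : ℕ} (hm : m < n) : ∃ x, ccwDist a x = m := by
  have ha := a.isLt
  by_cases h : a.val + m < n
  · refine ⟨⟨a.val + m, h⟩, ?_⟩
    rw [ccwDist_eq_ite, if_pos (Nat.le_add_right _ _), Nat.add_sub_cancel_left]
  · refine ⟨⟨a.val + m - n, by omega⟩, ?_⟩
    rw [ccwDist_eq_ite, if_neg (by simp only; omega)]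
    simp only
    omega

lemma isHullEdge_of_ccwDist {a b : Fin n} (h : ccwDist a b = 1 ∨ ccwDist a b = n - 1) :
    IsHullEdge s(a, b) := by
  have ha := a.isLt
  have hb := b.isLt
  rw [ccwDist_eq_ite] at h
  refine ⟨a, b, rfl, ?_⟩
  by_cases hab : a.val + 1 = b.val ∨ b.val + 1 = a.val
  · rcases hab with hab | hab
    · exact Or.inl (by rw [hab, Nat.mod_eq_of_lt hb])
    · exact Or.inr (by rw [hab, Nat.mod_eq_of_lt ha])
  · split_ifs at h
    · exact Or.inr (by rw [(by omega : b.val + 1 = n), Nat.mod_self]; omega)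
    · exact Or.inl (by rw [(by omega : a.val + 1 = n), Nat.mod_self]; omega)

lemma crosses_of_ccwDist {a b x y : Fin n} (hx : 0 < ccwDist a x)
    (hxb : ccwDist a x < ccwDist a b) (hby : ccwDist a b < ccwDist a y) :
    Crosses s(a, b) s(x, y) := by
  have hne : ∀ {z w : Fin n}, ccwDist a z ≠ ccwDist a w → z ≠ w := fun h hzw => h (hzw ▸ rfl)
  have h0 := ccwDist_self a
  refine ⟨a, b, x, y, rfl, rfl, hne ?_, hne ?_, hne ?_, hne ?_, hne ?_, hne ?_, ?_⟩
  any_goals omega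
  change ccwDist a x < ccwDist a b ↔ ¬ ccwDist a y < ccwDist a b
  omega

/-- A walk through every point except the ends of a diagonal `ab` visits both sides of it, so
one of its steps crosses `ab`. -/
lemma exists_crosses_of_walk {a b : Fin n} (hab : a ≠ b) (hdiag : ¬ IsHullEdge s(a, b))
    (c : ℕ → Fin n) {s t : ℕ} (hc : ∀ m, s ≤ m → m < t → c m ≠ a ∧ c m ≠ b)
    (hsurj : ∀ x, x ≠ a → x ≠ b → ∃ m, s ≤ m ∧ m < t ∧ c m = x) :
    ∃ m, s ≤ m ∧ m + 1 < t ∧ Crosses s(a, b) s(c m, c (m + 1)) := by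
  have hne : ∀ {z w}, z ≠ w → ccwDist a z ≠ ccwDist a w := fun h h' => h (ccwDist_injective a h')
  set δ := ccwDist a b
  have hδ : 2 ≤ δ ∧ δ + 2 ≤ n := by
    have := ccwDist_lt a b
    have : δ ≠ 0 := fun h => hne hab ((ccwDist_self a).trans h.symm)
    have : δ ≠ 1 := fun h => hdiag (isHullEdge_of_ccwDist (Or.inl h))
    have : δ ≠ n - 1 := fun h => hdiag (isHullEdge_of_ccwDist (Or.inr h))
    omega
  have hvisit : ∀ {d : ℕ}, d < n → d ≠ 0 → d ≠ δ → ∃ m, s ≤ m ∧ m < t ∧ ccwDist a (c m) = d := by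
    intro d hd hd0 hdδ
    obtain ⟨x, rfl⟩ := exists_ccwDist_eq a hd
    obtain ⟨m, h1, h2, rfl⟩ :=
      hsurj x (fun h => hd0 (h ▸ ccwDist_self a)) (fun h => hdδ (h ▸ rfl))
    exact ⟨m, h1, h2, rfl⟩
  obtain ⟨m₁, hm₁, hm₁', hc₁⟩ := hvisit (d := 1) (by omega) one_ne_zero (by omega)
  obtain ⟨m₂, hm₂, hm₂', hc₂⟩ := hvisit (d := δ + 1) (by omega) (by omega) (by omega)
  obtain ⟨m, hm, hm', x, y, hxy, hx, hy⟩ :=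
    exists_sym2_flip c (fun z => ccwDist a z < δ) (s := m₁) (t := m₂) (by omega) (by omega)
  have hends : ∀ z ∈ s(x, y), z ≠ a ∧ z ≠ b := by
    rw [hxy]
    intro z hz
    rcases Sym2.mem_iff.1 hz with rfl | rfl
    exacts [hc m (by omega) (by omega), hc (m + 1) (by omega) (by omega)]
  have hx0 := hne (hends x (Sym2.mem_mk_left x y)).1
  have hyδ := hne (hends y (Sym2.mem_mk_right x y)).2
  rw [ccwDist_self] at hx0
  refine ⟨m, by omega, by omega, ?_⟩
  rw [← hxy]
  exact crosses_of_ccwDist (by omega) hx (by omega)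

end Convex

section Boundary

variable (hn : 0 < n) (p : Equiv.Perm (Fin n))

/-- The closed tour through `p` from `pⱼ₊₁` around to `pⱼ` is a walk as in
`exists_crosses_of_walk`; its steps are edges of the path or the closing edge. -/
lemma exists_crosses_pathEdge {j : ℕ} (hj : j < n - 1) (hdiag : ¬ IsHullEdge (pathEdge hn p j)) :
    ∃ m, Crosses (pathEdge hn p j) (pathEdge hn p m) := by
  have hab : p (pt n hn j) ≠ p (pt n hn (j + 1)) := fun h => by
    have := eq_of_pt_eq hn (s := j) le_rfl (by omega) (by omega) (by omega) (p.injective h)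
    omega
  have hsurj : ∀ x, x ≠ p (pt n hn j) → x ≠ p (pt n hn (j + 1)) →
      ∃ m, j + 2 ≤ m ∧ m < j + n ∧ p (pt n hn m) = x := fun x hxj hxj' => by
    obtain ⟨m, h1, h2, hm⟩ := exists_pt_eq_of_between hn
      (mt p.symm_apply_eq.1 hxj) (mt p.symm_apply_eq.1 hxj')
    exact ⟨m, h1, h2, by simp [hm]⟩
  obtain ⟨m, -, -, hm⟩ := exists_crosses_of_walk hab hdiag (fun m => p (pt n hn m))
    (fun m h1 h2 => (pt_ne_of_between hn h1 h2).imp p.injective.ne p.injective.ne) hsurj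
  exact ⟨m, hm⟩

lemma isHullEdge_of_not_crosses_closingEdge
    (hNC : ∀ e ∈ pathEdges p, ∀ f ∈ pathEdges p, ¬ Crosses e f)
    (hclose : ∀ e ∈ pathEdges p, ¬ Crosses e (closingEdge hn p)) {e : Sym2 (Fin n)}
    (he : e ∈ pathEdges p) : IsHullEdge e := by
  obtain ⟨j, hj, rfl⟩ := (mem_pathEdges_iff hn p).1 he
  by_contra hdiag
  obtain ⟨m, hm⟩ := exists_crosses_pathEdge hn p hj hdiag
  rcases pathEdge_mem_or_eq_closingEdge hn p m with h | h
  · exact hNC _ he _ h hm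
  · exact hclose _ he (h ▸ hm)

lemma exists_not_isNCPath_exchange (h5 : 5 ≤ n)
    (hNC : ∀ e ∈ pathEdges p, ∀ f ∈ pathEdges p, ¬ Crosses e f)
    (hdiag : ∃ e ∈ pathEdges p, ¬ IsHullEdge e) :
    ∃ k, 1 ≤ k ∧ k ≤ n - 3 ∧ ¬ IsNCPath (exchange hn p k (closingEdge hn p)) := by
  by_contra! hgood
  obtain ⟨e, he, hdiag⟩ := hdiag
  refine hdiag (isHullEdge_of_not_crosses_closingEdge hn p hNC (fun e' he' => ?_) he)
  obtain ⟨j, hj, rfl⟩ := (mem_pathEdges_iff hn p).1 he'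
  obtain ⟨k, hk, hkj⟩ : ∃ k, (1 ≤ k ∧ k ≤ n - 3) ∧ k ≠ j :=
    ⟨if j = 1 then 2 else 1, by split_ifs <;> omega, by split_ifs <;> omega⟩
  have hkept : pathEdge hn p j ∈ exchange hn p k (closingEdge hn p) :=
    mem_insert_of_mem <| mem_erase.2 ⟨fun h => hkj <|
      (pathEdge_injOn hn p (by simpa using hj) (by simp; omega) h).symm, he'⟩
  exact (hgood k hk.1 hk.2).2 _ hkept _ (mem_insert_self _ _)

end Boundary

/-- In `G(P)` with `n ≥ 5` points in convex position, every non-boundary path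
(containing at least one diagonal) has degree strictly less than `3n - 7`. -/
theorem nonboundary_degree_lt (n : ℕ) (hn : 5 ≤ n) (v : PVert n)
    (hv : ¬ IsBoundary v) :
    (pathGraph n).degree v < 3 * n - 7 := by
  have hn0 : 0 < n := by omega
  obtain ⟨⟨p, hp⟩, hNC⟩ := v.2
  rw [hp] at hNC
  have hdiag : ∃ e ∈ pathEdges p, ¬ IsHullEdge e := by
    simpa only [IsBoundary, hp, not_forall, exists_prop] using hv
  obtain ⟨k, hk1, hk3, hbad⟩ := exists_not_isNCPath_exchange hn0 p hn hNC hdiag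
  have hmem : ⟨k, closingEdge hn0 p⟩ ∈ exchangePairs hn0 p :=
    mem_sigma.2 ⟨mem_range.2 (show k < n - 1 by omega),
      closingEdge_mem_exchangeEdges hn0 p (by omega) (show k < n - 1 by omega)⟩
  calc (pathGraph n).degree v
      ≤ #{x ∈ exchangePairs hn0 p | IsNCPath (exchange hn0 p x.1 x.2)} :=
        degree_le_card_filter_exchangePairs hn0 hp
    _ < #(exchangePairs hn0 p) := card_lt_card (filter_ssubset.2 ⟨_, hmem, hbad⟩)
    _ ≤ 3 * n - 7 := card_exchangePairs_le hn0 p (by omega)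

end PG
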